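/- arXiv:2107.03549 — 2 statements merged into one kernel-verified Lean document; each statement's English description precedes it below -/
import Mathlib

section
/- For every integer k ≥ 2, the polynomial r_k(X) divides the polynomial p_k(X^k) in ℤ[X]. -/
/-!
Write `Q_n(x) = ∑_{j=0}^{n} P(n,j) x^(n-j)` (`rowSum x n`), so that `p_n = -Q_n`. The defining recursion of `P`
gives `Q_{n+1} = (2x - 1) Q_n + x^(n+1)`, whence `(x - 1) Q_n(x) = (2x - 1)^n - x^(n+1)`.
With `Φ = ∑_{i=1}^{k} X^(k-i)` we have `(X - 1) Φ = X^k - 1` and `(X - 1) r_k = X^(k+1) - (2X^k - 1)`,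
so substituting `x = X^k` shows that `(X - 1) r_k` divides `(X - 1) Φ p_k(X^k)`, the difference of the
`k`-th powers of `X^(k+1)` and `2X^k - 1`. Cancelling `X - 1` gives `r_k ∣ Φ p_k(X^k)`, and
`r_k + (2 - X) Φ = 1` makes `r_k` coprime to `Φ`.
-/

def P : ℕ → ℕ → ℤ
  | 0, 0 => -1
  | 0, _ + 1 => 0
  | _ + 1, 0 => -1
  | i + 1, j + 1 => 2 * P i (j + 1) - P i j

open Polynomial Finset

lemma P_zero_right (n : ℕ) : P n 0 = -1 := by
  cases n <;> rfl

lemma P_succ_succ (i j : ℕ) : P (i + 1) (j + 1) = 2 * P i (j + 1) - P i j := rfl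

lemma P_eq_zero_of_lt : ∀ {n j : ℕ}, n < j → P n j = 0
  | 0, _ + 1, _ => rfl
  | n + 1, j + 1, h => by
    rw [P_succ_succ, P_eq_zero_of_lt (by omega : n < j + 1), P_eq_zero_of_lt (by omega : n < j)]
    rfl

lemma sum_Icc_one_eq_sum_range {M : Type*} [AddCommMonoid M] (f : ℕ → M) (n : ℕ) :
    ∑ i ∈ Icc 1 n, f i = ∑ j ∈ range n, f (j + 1) := by
  rw [range_eq_Ico, sum_Ico_add', ← Ico_add_one_right_eq_Icc, zero_add]

section CommRing

variable {R : Type*} [CommRing R]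

lemma sub_one_mul_sum_Icc_pow (x : R) (k : ℕ) :
    (x - 1) * ∑ i ∈ Icc 1 k, x ^ (k - i) = x ^ k - 1 := by
  simp_rw [sum_Icc_one_eq_sum_range, add_comm _ 1, ← Nat.sub_sub]
  rw [sum_range_reflect (x ^ ·) k, mul_comm, geom_sum_mul]

def rowSum (x : R) (n : ℕ) : R := ∑ j ∈ range (n + 1), (P n j : R) * x ^ (n - j)

lemma rowSum_eq_sum_Icc_sub_pow (x : R) (n : ℕ) :
    rowSum x n = ∑ i ∈ Icc 1 n, (P n i : R) * x ^ (n - i) - x ^ n := by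
  rw [rowSum, sum_range_succ', sum_Icc_one_eq_sum_range, P_zero_right, Nat.sub_zero]
  push_cast
  ring

lemma sum_range_P_succ_mul_pow (x : R) (n : ℕ) :
    ∑ j ∈ range (n + 1), (P n (j + 1) : R) * x ^ (n - j) = x * (rowSum x n + x ^ n) := by
  rw [sum_range_succ, P_eq_zero_of_lt n.lt_succ_self, rowSum_eq_sum_Icc_sub_pow,
    sum_Icc_one_eq_sum_range, sub_add_cancel, mul_sum, Int.cast_zero, zero_mul, add_zero]
  refine sum_congr rfl fun j hj => ?_
  rw [mul_left_comm, ← pow_succ', Nat.sub_add_eq,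
    Nat.sub_add_cancel (Nat.sub_pos_of_lt (mem_range.mp hj))]

lemma rowSum_succ (x : R) (n : ℕ) :
    rowSum x (n + 1) = (2 * x - 1) * rowSum x n + x ^ (n + 1) := by
  rw [rowSum, sum_range_succ', P_zero_right]
  simp only [P_succ_succ, Int.cast_sub, Int.cast_mul, Int.cast_ofNat, sub_mul, sum_sub_distrib,
    mul_assoc, ← mul_sum, Nat.add_sub_add_right]
  rw [sum_range_P_succ_mul_pow, ← rowSum]
  push_cast
  ring

lemma sub_one_mul_rowSum (x : R) (n : ℕ) :
    (x - 1) * rowSum x n = (2 * x - 1) ^ n - x ^ (n + 1) := by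
  induction n with
  | zero => simp [rowSum, P_zero_right]
  | succ n ih => rw [rowSum_succ]; linear_combination (2 * x - 1) * ih

end CommRing

lemma comp_X_pow_eq_neg_rowSum (k : ℕ) :
    ((X : ℤ[X]) ^ k - ∑ i ∈ Icc 1 k, C (P k i) * X ^ (k - i)).comp (X ^ k) = -rowSum (X ^ k) k := by
  simp only [rowSum_eq_sum_Icc_sub_pow, sub_comp, pow_comp, X_comp, Polynomial.sum_comp, mul_comp,
    eq_intCast, intCast_comp]
  ring

open Polynomial in
theorem rk_dvd_pk_comp_general (k : ℕ) :
    ((X : ℤ[X]) ^ k - ∑ i ∈ Finset.Icc 1 k, X ^ (k - i)) ∣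
      ((X : ℤ[X]) ^ k - ∑ i ∈ Finset.Icc 1 k, C (P k i) * X ^ (k - i)).comp (X ^ k) := by
  set Φ : ℤ[X] := ∑ i ∈ Icc 1 k, X ^ (k - i)
  have hΦ : (X - 1) * Φ = X ^ k - 1 := sub_one_mul_sum_Icc_pow X k
  have hcop : IsCoprime (X ^ k - Φ) Φ := ⟨1, 2 - X, by linear_combination -hΦ⟩
  have hX : (X - 1 : ℤ[X]) ≠ 0 := by simpa using X_sub_C_ne_zero (1 : ℤ)
  have hdvd : (X - 1) * (X ^ k - Φ) ∣ (X - 1) * (Φ * -rowSum (X ^ k) k) := by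
    have hr : (X - 1) * (X ^ k - Φ) = X ^ (k + 1) - (2 * X ^ k - 1) := by
      linear_combination -hΦ
    have hp : (X - 1) * (Φ * -rowSum (X ^ k) k) = (X ^ (k + 1)) ^ k - (2 * X ^ k - 1) ^ k := by
      linear_combination -rowSum (X ^ k : ℤ[X]) k * hΦ - sub_one_mul_rowSum (X ^ k : ℤ[X]) k
    rw [hr, hp]
    exact sub_dvd_pow_sub_pow _ _ k
  rw [comp_X_pow_eq_neg_rowSum]
  exact hcop.dvd_of_dvd_mul_left ((mul_dvd_mul_iff_left hX).mp hdvd)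

open Polynomial in
/-- For every `k ≥ 2`, the polynomial `r_k(X) = X^k - ∑_{i=1}^k X^(k-i)` divides
`p_k(X^k)` in `ℤ[X]`, where `p_k(X) = X^k - ∑_{i=1}^k P k i • X^(k-i)`. -/
theorem rk_dvd_pk_comp (k : ℕ) (hk : 2 ≤ k) :
    ((X : ℤ[X]) ^ k - ∑ i ∈ Finset.Icc 1 k, X ^ (k - i)) ∣
      ((X : ℤ[X]) ^ k - ∑ i ∈ Finset.Icc 1 k, C (P k i) * X ^ (k - i)).comp (X ^ k) :=
  rk_dvd_pk_comp_general k
end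

section
/- For all natural numbers k, j, m with k ≥ 2, 0 ≤ j ≤ k-2, and 1 ≤ m ≤ j, the identity -P(k-1,k-1-j) - Q(k-m,k-j) + ∑_{r=k-m}^{k-1} Q(r,k-j-1) + ∑_{r=k-j}^{k-1-m} Q(r,k-j) = 0 holds, where the last sum is interpreted as 0 when k-1-m < k-j. -/
/-- The triangle `Q`, the backward difference of `P` in the row index. -/
def Q : ℕ → ℕ → ℤ
  | 0, _ => 0
  | i + 1, j => P (i + 1) j - P i j

/-!
Put `a = k - m - 1` and `b = k - j - 1`. The backward differences telescope: the first sum is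
`P (k-1) b - P a b`, and the second is `P a (b+1) - P b (b+1) = P a (b+1)` since `P` vanishes
above the diagonal. What remains, `P a (b+1) - P a b - Q (a+1) (b+1)`, is zero by the
recursion for `P`.
-/
open Finset

lemma P_eq_zero_of_lt_s18 {i j : ℕ} (h : i < j) : P i j = 0 := by
  induction i generalizing j with
  | zero => obtain ⟨j, rfl⟩ := Nat.exists_eq_add_one_of_ne_zero h.ne'; rfl
  | succ i ih =>
    obtain ⟨j, rfl⟩ := Nat.exists_eq_add_one_of_ne_zero (by omega : j ≠ 0)
    rw [P, ih (by omega), ih (by omega)]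
    simp

lemma Q_succ_succ (i j : ℕ) : Q (i + 1) (j + 1) = P i (j + 1) - P i j := by
  rw [Q, P]
  ring

lemma sum_Ioc_Q {a b : ℕ} (hab : a ≤ b) (c : ℕ) : ∑ r ∈ Ioc a b, Q r c = P b c - P a c := by
  induction b, hab using Nat.le_induction with
  | base => simp
  | succ b hab ih =>
    rw [sum_Ioc_succ_top hab, ih, Q]
    ring

theorem caseE_sum_general (k j m : ℕ) (hk : 2 ≤ k) (hj : j ≤ k - 2) (hmj : m ≤ j) :
    -P (k - 1) (k - 1 - j) - Q (k - m) (k - j) +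
      (∑ r ∈ Finset.Icc (k - m) (k - 1), Q r (k - j - 1)) +
      (∑ r ∈ Finset.Icc (k - j) (k - 1 - m), Q r (k - j)) = 0 := by
  set a := k - m - 1
  set b := k - j - 1
  rw [show k - 1 - j = b by omega, show k - 1 - m = a by omega, show k - m = a + 1 by omega,
    show k - 1 = a + m by omega, show k - j = b + 1 by omega,
    Icc_add_one_left_eq_Ioc, Icc_add_one_left_eq_Ioc,
    sum_Ioc_Q (Nat.le_add_right a m), sum_Ioc_Q (by omega : b ≤ a),
    Q_succ_succ, P_eq_zero_of_lt_s18 (Nat.lt_succ_self b)]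
  ring

/-- Case E computation: for `k ≥ 2`, `0 ≤ j ≤ k-2`, `1 ≤ m ≤ j`,
`-P (k-1) (k-1-j) - Q (k-m) (k-j) + ∑_{r=k-m}^{k-1} Q r (k-j-1)
  + ∑_{r=k-j}^{k-1-m} Q r (k-j) = 0`
(the last sum being empty, hence `0`, when `k-1-m < k-j`). -/
theorem caseE_sum (k j m : ℕ) (hk : 2 ≤ k) (hj : j ≤ k - 2) (hm : 1 ≤ m) (hmj : m ≤ j) :
    -P (k - 1) (k - 1 - j) - Q (k - m) (k - j) +
      (∑ r ∈ Finset.Icc (k - m) (k - 1), Q r (k - j - 1)) +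
      (∑ r ∈ Finset.Icc (k - j) (k - 1 - m), Q r (k - j)) = 0 :=
  caseE_sum_general k j m hk hj hmj
end
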